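/- arXiv:1808.04757 — 5 statements merged into one kernel-verified Lean document; each statement's English description precedes it below -/
import Mathlib

section
/- Let S ≠ T be k-subsets of [n], and let h(S,T) be the multigraph on vertex set [n] whose edge multiset is the union of f(S) and f(T) (viewing pairs (x,y) ∈ ([n]∖[k])×[k] as edges). Then the set of vertices of degree one in h(S,T) is exactly the symmetric difference S Δ T. -/
/-!
`f(S)` zips two duplicate-free lists enumerating `S \ [k]` and `[k] \ S`, which have the same
length because `#S = k`; so it is a matching, and a vertex has degree one in it exactly when it
lies in `S ∆ [k]`. Hence `v` has degree one in `h(S,T)` iff it lies in exactly one of `S ∆ [k]`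
and `T ∆ [k]`, i.e. in `(S ∆ [k]) ∆ (T ∆ [k]) = S ∆ T`.
-/

def matchF (k : ℕ) (S : Finset ℕ) : Finset (ℕ × ℕ) :=
  (((S \ Finset.Icc 1 k).sort (· ≤ ·)).reverse.zip
    ((Finset.Icc 1 k \ S).sort (· ≤ ·))).toFinset

/-- The degree of vertex `v` in the multigraph `h(S,T)` whose edge multiset is
`f(S) ⊎ f(T)` (each pair `(x,y)` is an edge joining `x` and `y`). -/
def degH (k : ℕ) (S T : Finset ℕ) (v : ℕ) : ℕ :=
  ((matchF k S).filter fun p => p.1 = v ∨ p.2 = v).card +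
  ((matchF k T).filter fun p => p.1 = v ∨ p.2 = v).card

open Finset
open scoped symmDiff

namespace List

variable {α β : Type*} [DecidableEq α] [DecidableEq β]

theorem card_filter_toFinset_eq_count_map {l : List α} (hl : l.Nodup) (f : α → β) (b : β) :
    #(l.toFinset.filter (f · = b)) = (l.map f).count b := by
  rw [← toFinset_eq hl, ← Multiset.coe_count, ← Multiset.map_coe, Multiset.count_map]
  simp [Finset.card, eq_comm]

variable {l₁ : List α} {l₂ : List β}

theorem card_filter_fst_toFinset_zip (h₁ : l₁.Nodup) (hlen : l₁.length ≤ l₂.length) (a : α) :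
    #((l₁.zip l₂).toFinset.filter (·.1 = a)) = if a ∈ l₁ then 1 else 0 := by
  have hmap := map_fst_zip hlen
  rw [card_filter_toFinset_eq_count_map (.of_map Prod.fst (by rwa [hmap])), hmap, h₁.count]

theorem card_filter_snd_toFinset_zip (h₂ : l₂.Nodup) (hlen : l₂.length ≤ l₁.length) (b : β) :
    #((l₁.zip l₂).toFinset.filter (·.2 = b)) = if b ∈ l₂ then 1 else 0 := by
  have hmap := map_snd_zip hlen
  rw [card_filter_toFinset_eq_count_map (.of_map Prod.snd (by rwa [hmap])), hmap, h₂.count]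

end List

section matchF

variable {k : ℕ} {S : Finset ℕ}

theorem fst_ne_snd_of_mem_matchF {p : ℕ × ℕ} (hp : p ∈ matchF k S) : p.1 ≠ p.2 := by
  obtain ⟨h₁, h₂⟩ := List.of_mem_zip (List.mem_toFinset.1 hp)
  simp only [List.mem_reverse, mem_sort, mem_sdiff] at h₁ h₂
  exact ne_of_mem_of_not_mem h₁.1 h₂.2

theorem length_sort_sdiff_Icc_eq (hS : #S = k) :
    ((S \ Icc 1 k).sort (· ≤ ·)).reverse.length = ((Icc 1 k \ S).sort (· ≤ ·)).length := by
  simp only [List.length_reverse, length_sort]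
  exact card_sdiff_comm (by rw [hS, Nat.card_Icc, Nat.add_sub_cancel])

theorem card_filter_fst_matchF (hS : #S = k) (v : ℕ) :
    #((matchF k S).filter (·.1 = v)) = if v ∈ S \ Icc 1 k then 1 else 0 := by
  rw [matchF, List.card_filter_fst_toFinset_zip (List.nodup_reverse.2 (sort_nodup _ _))
    (length_sort_sdiff_Icc_eq hS).le]
  simp

theorem card_filter_snd_matchF (hS : #S = k) (v : ℕ) :
    #((matchF k S).filter (·.2 = v)) = if v ∈ Icc 1 k \ S then 1 else 0 := by
  rw [matchF, List.card_filter_snd_toFinset_zip (sort_nodup _ _) (length_sort_sdiff_Icc_eq hS).ge]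
  simp

theorem card_filter_incident_matchF (hS : #S = k) (v : ℕ) :
    #((matchF k S).filter fun p => p.1 = v ∨ p.2 = v) = if v ∈ S ∆ Icc 1 k then 1 else 0 := by
  have hdisj : Disjoint ((matchF k S).filter (·.1 = v)) ((matchF k S).filter (·.2 = v)) :=
    disjoint_filter.2 fun p hp h₁ h₂ => fst_ne_snd_of_mem_matchF hp (h₁.trans h₂.symm)
  rw [filter_or, card_union_of_disjoint hdisj, card_filter_fst_matchF hS, card_filter_snd_matchF hS]
  by_cases hvS : v ∈ S <;> by_cases hvI : v ∈ Icc 1 k <;> simp [hvS, hvI, mem_symmDiff]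

end matchF

theorem degH_eq_one_iff {k : ℕ} {S T : Finset ℕ} (hS : #S = k) (hT : #T = k) (v : ℕ) :
    degH k S T v = 1 ↔ v ∈ S ∆ T := by
  have hcancel : S ∆ T = S ∆ Icc 1 k ∆ (T ∆ Icc 1 k) := by
    rw [symmDiff_symmDiff_symmDiff_comm, symmDiff_self, symmDiff_bot]
  rw [degH, card_filter_incident_matchF hS, card_filter_incident_matchF hT, hcancel]
  generalize S ∆ Icc 1 k = A, T ∆ Icc 1 k = B
  by_cases hA : v ∈ A <;> by_cases hB : v ∈ B <;> simp [mem_symmDiff, hA, hB]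

theorem degree_one_eq_symmDiff_general (n k : ℕ) (S T : Finset ℕ)
    (hSsub : S ⊆ Finset.Icc 1 n) (hTsub : T ⊆ Finset.Icc 1 n)
    (hScard : S.card = k) (hTcard : T.card = k) :
    (Finset.Icc 1 n).filter (fun v => degH k S T v = 1) = (S \ T) ∪ (T \ S) := by
  rw [← Finset.symmDiff_def]
  ext v
  rw [mem_filter, degH_eq_one_iff hScard hTcard]
  exact and_iff_right_of_imp fun hv => union_subset hSsub hTsub (symmDiff_subset_union hv)

/-- The set of vertices of degree one in `h(S,T)` is exactly `S Δ T`. -/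
theorem degree_one_eq_symmDiff (n k : ℕ) (hk : k ≤ n) (S T : Finset ℕ)
    (hSsub : S ⊆ Finset.Icc 1 n) (hTsub : T ⊆ Finset.Icc 1 n)
    (hScard : S.card = k) (hTcard : T.card = k) (hST : S ≠ T) :
    (Finset.Icc 1 n).filter (fun v => degH k S T v = 1) = (S \ T) ∪ (T \ S) :=
  degree_one_eq_symmDiff_general n k S T hSsub hTsub hScard hTcard
end

section
/- Let S ≠ T be k-subsets of [n] and let h(S,T) be the multigraph whose edges are f(S) ∪ f(T) (with multiplicity). Then every cycle in h(S,T) has exactly 2 vertices; that is, h(S,T) contains no cycle on 3 or more vertices, so every connected component of h(S,T) is an isolated vertex, a path, or a doubled edge. -/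
/-- The underlying simple graph of the multigraph `h(S,T)`, whose edges are the
pairs of `f(S) ∪ f(T)`. -/
def hGraph (k : ℕ) (S T : Finset ℕ) : SimpleGraph ℕ where
  Adj u v := u ≠ v ∧
    ((u, v) ∈ matchF k S ∪ matchF k T ∨ (v, u) ∈ matchF k S ∪ matchF k T)
  symm := ⟨by rintro u v ⟨h1, h2⟩; exact ⟨h1.symm, h2.elim Or.inr Or.inl⟩⟩
  loopless := ⟨by rintro u ⟨h1, _⟩; exact h1 rfl⟩

theorem List.lt_iff_lt_of_mem_zip {α β : Type*} [Preorder α] [Preorder β] {l : List α}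
    {m : List β} (hl : l.Pairwise (· > ·)) (hm : m.Pairwise (· < ·)) {p q : α × β}
    (hp : p ∈ l.zip m) (hq : q ∈ l.zip m) : p.1 < q.1 ↔ q.2 < p.2 := by
  induction l generalizing m with
  | nil => simp at hp
  | cons a l ih =>
    cases m with
    | nil => simp at hp
    | cons b m =>
      rw [List.pairwise_cons] at hl hm
      have hhead (r : α × β) (hr : r ∈ l.zip m) : r.1 < a ∧ b < r.2 :=
        ⟨hl.1 _ (List.of_mem_zip hr).1, hm.1 _ (List.of_mem_zip hr).2⟩
      rw [List.zip_cons_cons, List.mem_cons] at hp hq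
      rcases hp with rfl | hp <;> rcases hq with rfl | hq
      · simp
      · have := hhead q hq
        exact iff_of_false this.1.not_gt this.2.not_gt
      · have := hhead p hp
        exact iff_of_true this.1 this.2
      · exact ih hl.2 hm.2 hp hq

theorem SimpleGraph.Walk.IsCycle.exists_adj_adj_ne {V : Type*} {G : SimpleGraph V} {u v : V}
    {c : G.Walk v v} (hc : c.IsCycle) (hu : u ∈ c.support) :
    ∃ a ∈ c.support, ∃ b ∈ c.support, a ≠ b ∧ G.Adj u a ∧ G.Adj u b := by
  obtain ⟨a, b, hab, hnbr⟩ :=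
    Set.ncard_eq_two.1 (hc.ncard_neighborSet_toSubgraph_eq_two hu)
  have hadj {w : V} (hw : w ∈ c.toSubgraph.neighborSet u) : w ∈ c.support ∧ G.Adj u w :=
    ⟨c.mem_verts_toSubgraph.1 hw.snd_mem, hw.adj_sub⟩
  obtain ⟨ha, hua⟩ := hadj (by rw [hnbr]; exact Set.mem_insert a {b})
  obtain ⟨hb, hub⟩ := hadj (by rw [hnbr]; exact Set.mem_insert_of_mem a rfl)
  exact ⟨a, ha, b, hb, hab, hua, hub⟩

section AntitoneMatching

variable {α : Type*}

def Partner (M : Finset (α × α)) (u w : α) : Prop := (u, w) ∈ M ∨ (w, u) ∈ M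

def HasTwoPartnersIn (M N : Finset (α × α)) (V : Set α) (u : α) : Prop :=
  ∃ w₁ ∈ V, ∃ w₂ ∈ V, w₁ ≠ w₂ ∧ Partner M u w₁ ∧ Partner N u w₂

theorem HasTwoPartnersIn.symm {M N : Finset (α × α)} {V : Set α} {u : α}
    (h : HasTwoPartnersIn M N V u) : HasTwoPartnersIn N M V u :=
  let ⟨w₁, h₁, w₂, h₂, hne, hM, hN⟩ := h
  ⟨w₂, h₂, w₁, h₁, hne.symm, hN, hM⟩

variable [LinearOrder α]

structure IsAntitoneMatching (B : Set α) (M : Finset (α × α)) : Prop where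
  fst_notMem : ∀ p ∈ M, p.1 ∉ B
  snd_mem : ∀ p ∈ M, p.2 ∈ B
  lt_iff_lt : ∀ p ∈ M, ∀ q ∈ M, p.1 < q.1 ↔ q.2 < p.2

namespace IsAntitoneMatching

variable {B : Set α} {M N : Finset (α × α)}

theorem partner_iff_of_mem (hM : IsAntitoneMatching B M) {u w : α} (hu : u ∈ B) :
    Partner M u w ↔ (w, u) ∈ M :=
  ⟨fun h => h.resolve_left fun h' => hM.fst_notMem _ h' hu, Or.inr⟩

theorem partner_iff_of_notMem (hM : IsAntitoneMatching B M) {u w : α} (hu : u ∉ B) :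
    Partner M u w ↔ (u, w) ∈ M :=
  ⟨fun h => h.resolve_right fun h' => hu (hM.snd_mem _ h'), Or.inl⟩

theorem partner_unique (hM : IsAntitoneMatching B M) {u w₁ w₂ : α}
    (h₁ : Partner M u w₁) (h₂ : Partner M u w₂) : w₁ = w₂ := by
  by_cases hu : u ∈ B
  · rw [hM.partner_iff_of_mem hu] at h₁ h₂
    have h₁₂ := hM.lt_iff_lt _ h₁ _ h₂
    have h₂₁ := hM.lt_iff_lt _ h₂ _ h₁
    simp only [lt_self_iff_false, iff_false, not_lt] at h₁₂ h₂₁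
    exact le_antisymm h₂₁ h₁₂
  · rw [hM.partner_iff_of_notMem hu] at h₁ h₂
    have h₁₂ := hM.lt_iff_lt _ h₁ _ h₂
    have h₂₁ := hM.lt_iff_lt _ h₂ _ h₁
    simp only [lt_self_iff_false, false_iff, not_lt] at h₁₂ h₂₁
    exact le_antisymm h₁₂ h₂₁

theorem exists_partner_ne (hM : IsAntitoneMatching B M) (hN : IsAntitoneMatching B N)
    {V : Set α} {x y : α} (hxy : (x, y) ∈ M) (hx : HasTwoPartnersIn M N V x) :
    ∃ w ∈ V, w ≠ y ∧ (x, w) ∈ N := by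
  obtain ⟨w₁, -, w₂, hw₂, hne, hM₁, hN₂⟩ := hx
  have hw₁ : w₁ = y := hM.partner_unique hM₁ (Or.inl hxy)
  refine ⟨w₂, hw₂, hw₁ ▸ hne.symm, ?_⟩
  exact (hN.partner_iff_of_notMem (hM.fst_notMem _ hxy)).1 hN₂

theorem not_forall_hasTwoPartnersIn (hM : IsAntitoneMatching B M)
    (hN : IsAntitoneMatching B N) {V : Set α} (hV : V.Finite) (hne : V.Nonempty) :
    ¬ ∀ u ∈ V, HasTwoPartnersIn M N V u := by
  intro h
  have hVB : (V ∩ B).Nonempty := by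
    obtain ⟨u, hu⟩ := hne
    obtain ⟨w, hw, -, -, -, hMw, -⟩ := h u hu
    by_cases huB : u ∈ B
    · exact ⟨u, hu, huB⟩
    · exact ⟨w, hw, hM.snd_mem _ ((hM.partner_iff_of_notMem huB).1 hMw)⟩
  obtain ⟨y, hy⟩ := (hV.inter_of_left B).exists_minimal hVB
  obtain ⟨x, hx, x', hx', -, hyx, hyx'⟩ := h y hy.prop.1
  rw [hM.partner_iff_of_mem hy.prop.2] at hyx
  rw [hN.partner_iff_of_mem hy.prop.2] at hyx'
  have above_y {w : α} (hw : w ∈ V) (hwB : w ∈ B) (hwy : w ≠ y) : y < w :=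
    lt_of_le_of_ne (not_lt.1 (hy.not_lt ⟨hw, hwB⟩)) hwy.symm
  obtain ⟨w, hw, hwy, hxw⟩ := hM.exists_partner_ne hN hyx (h x hx)
  obtain ⟨w', hw', hwy', hxw'⟩ := hN.exists_partner_ne hM hyx' (h x' hx').symm
  exact lt_asymm ((hN.lt_iff_lt _ hxw _ hyx').2 (above_y hw (hN.snd_mem _ hxw) hwy))
    ((hM.lt_iff_lt _ hxw' _ hyx).2 (above_y hw' (hM.snd_mem _ hxw') hwy'))

theorem isAcyclic_of_adj (hM : IsAntitoneMatching B M) (hN : IsAntitoneMatching B N)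
    {G : SimpleGraph α} (hG : ∀ u w, G.Adj u w → Partner M u w ∨ Partner N u w) :
    G.IsAcyclic := by
  intro v c hc
  refine hM.not_forall_hasTwoPartnersIn hN c.support.finite_toSet ⟨v, c.start_mem_support⟩ ?_
  intro u hu
  obtain ⟨a, ha, b, hb, hab, hua, hub⟩ := hc.exists_adj_adj_ne hu
  rcases hG u a hua with haM | haN <;> rcases hG u b hub with hbM | hbN
  · exact absurd (hM.partner_unique haM hbM) hab
  · exact ⟨a, ha, b, hb, hab, haM, hbN⟩
  · exact ⟨b, hb, a, ha, hab.symm, hbM, haN⟩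
  · exact absurd (hN.partner_unique haN hbN) hab

end IsAntitoneMatching

end AntitoneMatching

theorem matchF_isAntitoneMatching (k : ℕ) (S : Finset ℕ) :
    IsAntitoneMatching (Finset.Icc 1 k : Set ℕ) (matchF k S) := by
  have hmem {p : ℕ × ℕ} (hp : p ∈ matchF k S) :
      p.1 ∈ S \ Finset.Icc 1 k ∧ p.2 ∈ Finset.Icc 1 k \ S := by
    simpa only [List.mem_reverse, Finset.mem_sort] using
      List.of_mem_zip (List.mem_toFinset.1 hp)
  refine ⟨fun p hp => (Finset.mem_sdiff.1 (hmem hp).1).2,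
    fun p hp => (Finset.mem_sdiff.1 (hmem hp).2).1, fun p hp q hq => ?_⟩
  exact List.lt_iff_lt_of_mem_zip
    (List.sortedGT_iff_pairwise.1 (Finset.sortedLT_sort _).reverse)
    (List.sortedLT_iff_pairwise.1 (Finset.sortedLT_sort _))
    (List.mem_toFinset.1 hp) (List.mem_toFinset.1 hq)

theorem hGraph_no_long_cycle_general (k : ℕ) (S T : Finset ℕ) :
    (hGraph k S T).IsAcyclic :=
  (matchF_isAntitoneMatching k S).isAcyclic_of_adj (matchF_isAntitoneMatching k T)
    fun u w h => by
      simp only [hGraph, Finset.mem_union] at h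
      unfold Partner
      tauto

/-- `h(S,T)` contains no cycle on 3 or more vertices: the only possible cycles of the
multigraph are doubled edges, i.e. its underlying simple graph is acyclic. -/
theorem hGraph_no_long_cycle (n k : ℕ) (hk : k ≤ n) (S T : Finset ℕ)
    (hSsub : S ⊆ Finset.Icc 1 n) (hTsub : T ⊆ Finset.Icc 1 n)
    (hScard : S.card = k) (hTcard : T.card = k) (hST : S ≠ T) :
    (hGraph k S T).IsAcyclic :=
  hGraph_no_long_cycle_general k S T
end

section
/- The minimum number N such that the Johnson graph J(n,k) admits a (0,1,*)-addressing of length N satisfies N_2(J(n,k)) ≤ k(n−k). -/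
/-- A `(0,1,*)`-addressing of length `N` of a graph `G`: `*` is `none`,
`0`/`1` are `some false` / `some true`; the distance between any two vertices equals
the number of coordinates where both entries are in `{0,1}` and differ. -/
def isAddressing {V : Type*} (G : SimpleGraph V) (N : ℕ)
    (f : V → Fin N → Option Bool) : Prop :=
  ∀ u v : V, G.dist u v =
    (Finset.univ.filter fun j : Fin N =>
      ∃ a b : Bool, f u j = some a ∧ f v j = some b ∧ a ≠ b).card

/-- The Johnson graph `J(n,k)`. -/
def johnsonGraph (n k : ℕ) : SimpleGraph {S : Finset (Fin n) // S.card = k} where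
  Adj S T := S ≠ T ∧ (S.1 ∩ T.1).card = k - 1
  symm := by
    constructor
    rintro S T ⟨h1, h2⟩
    exact ⟨h1.symm, by rwa [Finset.inter_comm]⟩
  loopless := by constructor; rintro S ⟨h1, _⟩; exact h1 rfl

/-!
Write `s₀ < ⋯ < s_{k-1}` for the elements of `S`. The distance in `J(n,k)` is `|S \ T|`.
The address of `S` has, for each `r < k`, a row of `n - k` coordinates read at the positions
`p = r, …, r + n - k - 1`: the entry is `0` at `p = s_r`, `1` at `p < s_r` with `p ∉ S`, and `*`
otherwise. Rows `r` of `S` and `T` conflict exactly once if `s_r < t_r` and `s_r ∉ T` (or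
symmetrically), and never otherwise. Among the rows with `t_r < s_r`, those with `t_r ∈ S` match
those with `s_r ∈ T` through `t_r = s_q`, so the conflicting rows are as many as the `r` with
`s_r ∉ T`, that is `|S \ T|`.
-/

open Finset

namespace Finset

variable {α : Type*} [LinearOrder α] {S T : Finset α} {k : ℕ}

lemma card_filter_orderEmbOfFin (hS : #S = k) (p : α → Prop) [DecidablePred p] :
    #{i | p (S.orderEmbOfFin hS i)} = #(S.filter p) := by
  conv_rhs => rw [← map_orderEmbOfFin_univ S hS]
  rw [filter_map, card_map]
  rfl

lemma exists_orderEmbOfFin_eq (hS : #S = k) {x : α} (hx : x ∈ S) :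
    ∃ i, S.orderEmbOfFin hS i = x := by
  rwa [← Set.mem_range, range_orderEmbOfFin]

lemma card_filter_lt_orderEmbOfFin_mem_eq (hS : #S = k) (hT : #T = k) :
    #{i | T.orderEmbOfFin hT i < S.orderEmbOfFin hS i ∧ T.orderEmbOfFin hT i ∈ S} =
      #{i | T.orderEmbOfFin hT i < S.orderEmbOfFin hS i ∧ S.orderEmbOfFin hS i ∈ T} := by
  set s := S.orderEmbOfFin hS
  set t := T.orderEmbOfFin hT
  rw [← card_map t.toEmbedding, ← card_map s.toEmbedding]
  congr 1
  ext x
  simp only [mem_map, mem_filter, mem_univ, true_and, RelEmbedding.coe_toEmbedding]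
  constructor
  · rintro ⟨r, ⟨hlt, hrS⟩, rfl⟩
    obtain ⟨q, hq⟩ := exists_orderEmbOfFin_eq hS hrS
    have hqr : q < r := s.lt_iff_lt.1 (hq ▸ hlt)
    exact ⟨q, ⟨hq ▸ t.strictMono hqr, hq ▸ orderEmbOfFin_mem T hT r⟩, hq⟩
  · rintro ⟨q, ⟨hlt, hqT⟩, rfl⟩
    obtain ⟨r, hr⟩ := exists_orderEmbOfFin_eq hT hqT
    have hqr : q < r := t.lt_iff_lt.1 (hr ▸ hlt)
    exact ⟨r, ⟨hr ▸ s.strictMono hqr, hr ▸ orderEmbOfFin_mem S hS q⟩, hr⟩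

lemma card_filter_orderEmbOfFin_lt_add_eq_card_sdiff (hS : #S = k) (hT : #T = k) :
    #{i | S.orderEmbOfFin hS i < T.orderEmbOfFin hT i ∧ S.orderEmbOfFin hS i ∉ T} +
      #{i | T.orderEmbOfFin hT i < S.orderEmbOfFin hS i ∧ T.orderEmbOfFin hT i ∉ S} =
      #(S \ T) := by
  have hmem := card_filter_lt_orderEmbOfFin_mem_eq hS hT
  set s := S.orderEmbOfFin hS
  set t := T.orderEmbOfFin hT
  have hswap : #{i | t i < s i ∧ t i ∉ S} = #{i | t i < s i ∧ s i ∉ T} := by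
    have h₁ := card_filter_add_card_filter_not (s := {i | t i < s i}) (p := fun i ↦ t i ∈ S)
    have h₂ := card_filter_add_card_filter_not (s := {i | t i < s i}) (p := fun i ↦ s i ∈ T)
    simp only [filter_filter] at h₁ h₂
    omega
  have hsplit :
      #{i | s i ∉ T ∧ s i < t i} + #{i | s i ∉ T ∧ ¬ s i < t i} = #{i | s i ∉ T} := by
    simpa only [filter_filter] using
      card_filter_add_card_filter_not (s := {i | s i ∉ T}) (p := fun i ↦ s i < t i)
  have hne : ∀ i, s i ∉ T → (¬ s i < t i ↔ t i < s i) := fun i hi ↦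
    not_lt.trans (le_iff_lt_or_eq.trans (or_iff_left fun h ↦ hi (h ▸ orderEmbOfFin_mem T hT i)))
  rw [hswap, ← filter_notMem_eq_sdiff, ← card_filter_orderEmbOfFin hS, ← hsplit]
  congr 2 <;> ext i <;> simp only [mem_filter, mem_univ, true_and]
  · exact and_comm
  · exact ⟨fun h ↦ ⟨h.2, (hne i h.2).2 h.1⟩, fun h ↦ ⟨(hne i h.1).1 h.2, h.1⟩⟩

end Finset

section Johnson

variable {n k : ℕ}

lemma johnsonGraph_adj_iff {S T : {S : Finset (Fin n) // S.card = k}} :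
    (johnsonGraph n k).Adj S T ↔ #(S.1 \ T.1) = 1 := by
  have hsum := card_sdiff_add_card_inter S.1 T.1
  have hne : S ≠ T ↔ #(S.1 \ T.1) ≠ 0 := by
    rw [Ne, Ne, card_eq_zero, sdiff_eq_empty_iff_subset, Subtype.ext_iff]
    exact not_congr ⟨fun h ↦ h.subset, fun h ↦ eq_of_subset_of_card_le h (by rw [S.2, T.2])⟩
  change S ≠ T ∧ _ ↔ _
  rw [hne]
  rw [S.2] at hsum
  omega

lemma exists_adj_card_sdiff_succ {S T : {S : Finset (Fin n) // S.card = k}}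
    (h : #(S.1 \ T.1) ≠ 0) :
    ∃ U, (johnsonGraph n k).Adj S U ∧ #(U.1 \ T.1) + 1 = #(S.1 \ T.1) := by
  obtain ⟨x, hx⟩ := card_ne_zero.1 h
  obtain ⟨y, hy⟩ : (T.1 \ S.1).Nonempty :=
    card_ne_zero.1 (card_sdiff_eq_card_sdiff_iff.2 (T.2.trans S.2.symm) ▸ h)
  rw [mem_sdiff] at hx hy
  have hyx : y ∉ S.1.erase x := fun h ↦ hy.2 (mem_of_mem_erase h)
  have hU : #(insert y (S.1.erase x)) = k := by
    rw [card_insert_of_notMem hyx, card_erase_of_mem hx.1, S.2]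
    have : 0 < k := S.2 ▸ card_pos.2 ⟨x, hx.1⟩
    omega
  refine ⟨⟨_, hU⟩, johnsonGraph_adj_iff.2 ?_, ?_⟩
  · rw [card_eq_one]
    refine ⟨x, ext fun a ↦ ?_⟩
    simp only [mem_sdiff, mem_insert, mem_erase, mem_singleton]
    grind
  · have : insert y (S.1.erase x) \ T.1 = (S.1 \ T.1).erase x := by
      ext a
      simp only [mem_sdiff, mem_insert, mem_erase]
      grind
    rw [this, card_erase_of_mem (mem_sdiff.2 hx)]
    omega

lemma exists_walk_length_eq_card_sdiff (S T : {S : Finset (Fin n) // S.card = k}) :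
    ∃ W : (johnsonGraph n k).Walk S T, W.length = #(S.1 \ T.1) := by
  induction h : #(S.1 \ T.1) generalizing S with
  | zero =>
    have hST : S = T := by
      rw [card_eq_zero, sdiff_eq_empty_iff_subset] at h
      exact Subtype.ext (eq_of_subset_of_card_le h (by rw [S.2, T.2]))
    exact hST ▸ ⟨.nil, rfl⟩
  | succ m ih =>
    obtain ⟨U, hSU, hU⟩ := exists_adj_card_sdiff_succ (h.trans_ne m.succ_ne_zero)
    obtain ⟨W, hW⟩ := ih U (by omega)
    exact ⟨.cons hSU W, by simp [hW]⟩

lemma card_sdiff_le_length {S T : {S : Finset (Fin n) // S.card = k}}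
    (W : (johnsonGraph n k).Walk S T) : #(S.1 \ T.1) ≤ W.length := by
  induction W with
  | nil => simp
  | @cons S U T hSU W ih =>
    calc #(S.1 \ T.1) ≤ #(S.1 \ U.1 ∪ U.1 \ T.1) := card_le_card (sdiff_triangle _ _ _)
      _ ≤ #(S.1 \ U.1) + #(U.1 \ T.1) := card_union_le _ _
      _ ≤ (W.cons hSU).length := by
        rw [johnsonGraph_adj_iff.1 hSU, SimpleGraph.Walk.length_cons]
        omega

lemma johnsonGraph_dist (S T : {S : Finset (Fin n) // S.card = k}) :
    (johnsonGraph n k).dist S T = #(S.1 \ T.1) := by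
  obtain ⟨W, hW⟩ := exists_walk_length_eq_card_sdiff S T
  obtain ⟨P, hP⟩ := SimpleGraph.Reachable.exists_walk_length_eq_dist ⟨W⟩
  exact le_antisymm (hW ▸ SimpleGraph.dist_le W) (hP ▸ card_sdiff_le_length P)

end Johnson

def Clash (a b : Option Bool) : Prop := ∃ x y : Bool, a = some x ∧ b = some y ∧ x ≠ y

instance : DecidableRel Clash := fun _ _ ↦ inferInstanceAs (Decidable (∃ _, _))

def clashCount {ι : Type*} [Fintype ι] (u v : ι → Option Bool) : ℕ :=
  #{j | Clash (u j) (v j)}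

lemma isAddressing_iff {V : Type*} {G : SimpleGraph V} {N : ℕ} {f : V → Fin N → Option Bool} :
    isAddressing G N f ↔ ∀ u v, G.dist u v = clashCount (f u) (f v) := Iff.rfl

section clashCount

variable {ι κ : Type*} [Fintype ι] [Fintype κ]

lemma clashCount_comp_equiv (e : κ ≃ ι) (u v : ι → Option Bool) :
    clashCount (u ∘ e) (v ∘ e) = clashCount u v :=
  card_equiv e fun j ↦ by simp only [mem_filter, mem_univ, true_and, Function.comp_apply]

lemma clashCount_prod (u v : ι × κ → Option Bool) :
    clashCount u v = ∑ i, clashCount (fun j ↦ u (i, j)) (fun j ↦ v (i, j)) := by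
  simp only [clashCount, card_filter, Fintype.sum_prod_type]

end clashCount

section pivotEntry

variable {α : Type*} [LinearOrder α]

def pivotEntry (S : Finset α) (s p : α) : Option Bool :=
  if p = s then some false else if p < s ∧ p ∉ S then some true else none

lemma clash_pivotEntry_iff {S T : Finset α} {s t p : α} :
    Clash (pivotEntry S s p) (pivotEntry T t p) ↔
      p = s ∧ s < t ∧ s ∉ T ∨ p = t ∧ t < s ∧ t ∉ S := by
  unfold pivotEntry Clash
  split_ifs <;> grind

lemma card_filter_apply_eq_and {ι : Type*} [Fintype ι] {w : ι → α} (hw : w.Injective) {x : α}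
    {P : Prop} [Decidable P] (hx : P → x ∈ Set.range w) :
    #{j | w j = x ∧ P} = if P then 1 else 0 := by
  split_ifs with hP
  · obtain ⟨j, rfl⟩ := hx hP
    exact card_eq_one.2 ⟨j, ext fun i ↦ by simp [hw.eq_iff, hP]⟩
  · exact card_eq_zero.2 (filter_eq_empty_iff.2 fun _ _ h ↦ hP h.2)

lemma clashCount_pivotEntry {ι : Type*} [Fintype ι] {w : ι → α} (hw : w.Injective)
    {S T : Finset α} {s t : α} (hs : s < t → s ∈ Set.range w)
    (ht : t < s → t ∈ Set.range w) :
    clashCount (fun j ↦ pivotEntry S s (w j)) (fun j ↦ pivotEntry T t (w j)) =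
      (if s < t ∧ s ∉ T then 1 else 0) + (if t < s ∧ t ∉ S then 1 else 0) := by
  classical
  simp only [clashCount, clash_pivotEntry_iff]
  rw [filter_or, card_union_of_disjoint, card_filter_apply_eq_and hw (hs ·.1),
    card_filter_apply_eq_and hw (ht ·.1)]
  exact disjoint_filter.2 fun _ _ h₁ h₂ ↦ lt_asymm h₁.2.1 h₂.2.1

end pivotEntry

section Address

variable {n k : ℕ}

lemma Fin.le_val_of_strictMono {f : Fin k → Fin n} (hf : StrictMono f) (i : Fin k) :
    (i : ℕ) ≤ f i := by
  simpa using card_le_card_of_injOn f (s := Iio i) (t := Iio (f i))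
    (fun j hj ↦ by simpa using hf (by simpa using hj)) hf.injective.injOn

lemma Fin.val_add_le_of_strictMono {f : Fin k → Fin n} (hf : StrictMono f) (i : Fin k) :
    (f i : ℕ) + k ≤ n + i := by
  have := card_le_card_of_injOn f (s := Ioi i) (t := Ioi (f i))
    (fun j hj ↦ by simpa using hf (by simpa using hj)) hf.injective.injOn
  simp only [Fin.card_Ioi] at this
  omega

def rowWindow (r : Fin k) (j : Fin (n - k)) : Fin n := ⟨r + j, by omega⟩

lemma rowWindow_injective (r : Fin k) : (rowWindow (n := n) r).Injective := fun i j h ↦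
  Fin.ext (by simpa [rowWindow] using congrArg Fin.val h)

lemma orderEmbOfFin_mem_range_rowWindow {S T : Finset (Fin n)} (hS : #S = k) (hT : #T = k)
    (r : Fin k) (h : S.orderEmbOfFin hS r < T.orderEmbOfFin hT r) :
    S.orderEmbOfFin hS r ∈ Set.range (rowWindow r) := by
  have h₁ := Fin.le_val_of_strictMono (S.orderEmbOfFin hS).strictMono r
  have h₂ := Fin.val_add_le_of_strictMono (T.orderEmbOfFin hT).strictMono r
  rw [Fin.lt_def] at h
  exact ⟨⟨S.orderEmbOfFin hS r - r, by omega⟩, Fin.ext (by simp only [rowWindow]; omega)⟩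

def johnsonAddress (S : {S : Finset (Fin n) // S.card = k}) :
    Fin k × Fin (n - k) → Option Bool :=
  fun ij ↦ pivotEntry S.1 (S.1.orderEmbOfFin S.2 ij.1) (rowWindow ij.1 ij.2)

lemma clashCount_johnsonAddress (S T : {S : Finset (Fin n) // S.card = k}) :
    clashCount (johnsonAddress S) (johnsonAddress T) = #(S.1 \ T.1) := by
  rw [clashCount_prod, ← card_filter_orderEmbOfFin_lt_add_eq_card_sdiff S.2 T.2, card_filter,
    card_filter, ← sum_add_distrib]
  exact sum_congr rfl fun r _ ↦ clashCount_pivotEntry (rowWindow_injective r)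
    (orderEmbOfFin_mem_range_rowWindow S.2 T.2 r) (orderEmbOfFin_mem_range_rowWindow T.2 S.2 r)

end Address

theorem johnson_addressing_general (n k : ℕ) :
    ∃ f : {S : Finset (Fin n) // S.card = k} → Fin (k * (n - k)) → Option Bool,
      isAddressing (johnsonGraph n k) (k * (n - k)) f :=
  ⟨fun S ↦ johnsonAddress S ∘ finProdFinEquiv.symm, isAddressing_iff.2 fun S T ↦ by
    rw [clashCount_comp_equiv, clashCount_johnsonAddress, johnsonGraph_dist]⟩

/-- `N₂(J(n,k)) ≤ k(n-k)`: the Johnson graph has a `(0,1,*)`-addressing of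
length `k(n-k)`. -/
theorem johnson_addressing (n k : ℕ) (hk : k ≤ n) :
    ∃ f : {S : Finset (Fin n) // S.card = k} → Fin (k * (n - k)) → Option Bool,
      isAddressing (johnsonGraph n k) (k * (n - k)) f :=
  johnson_addressing_general n k
end

section
/- For any connected graph G on n vertices with distance matrix D, every (0,1,*)-addressing of G has length at least max(n_+(D), n_−(D)), where n_+(D) and n_−(D) are the numbers of positive and negative eigenvalues of D. -/
open Finset

private lemma witsen_aux {V : Type*} [Fintype V] [DecidableEq V]
    (D : Matrix V V ℝ) (hD : D.IsHermitian) (N : ℕ) (X Y : Fin N → V → ℝ)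
    (hdecomp : ∀ u w, D u w = ∑ j : Fin N, (X j u * Y j w + Y j u * X j w))
    (σ : ℝ) (P : Finset V) (hP : ∀ i ∈ P, 0 < σ * hD.eigenvalues i) :
    P.card ≤ N := by
  classical
  set b := hD.eigenvectorBasis with hb
  set lam := hD.eigenvalues with hlam
  have horth : ∀ k i : V, (∑ u : V, b k u * b i u) = if k = i then (1:ℝ) else 0 := by
    intro k i
    have h := orthonormal_iff_ite.mp b.orthonormal k i
    simpa [PiLp.inner_apply, RCLike.inner_apply, starRingEnd_apply, mul_comm] using h
  have hDb : ∀ (i : V) (u : V), (∑ w : V, D u w * b i w) = lam i * b i u := by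
    intro i u
    have h := congrFun (hD.mulVec_eigenvectorBasis i) u
    simpa [Matrix.mulVec, dotProduct] using h
  let T : (↥P → ℝ) →ₗ[ℝ] (Fin N → ℝ) :=
    { toFun := fun c j => ∑ u : V, X j u * ∑ i : ↥P, c i * b i.1 u
      map_add' := by
        intro c c'
        funext j
        simp [add_mul, mul_add, Finset.sum_add_distrib]
      map_smul' := by
        intro r c
        funext j
        simp [Finset.mul_sum, smul_eq_mul, mul_assoc, mul_left_comm] }
  have hinj : Function.Injective T := by
    rw [injective_iff_map_eq_zero]
    intro c hc
    obtain ⟨v, hv⟩ : ∃ v : V → ℝ, v = fun u => ∑ i : ↥P, c i * b i.1 u := ⟨_, rfl⟩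
    have hLv : ∀ j, (∑ u : V, X j u * v u) = 0 := by
      intro j
      rw [hv]
      exact congrFun hc j
    have hLv' : ∀ j, (∑ u : V, v u * X j u) = 0 := by
      intro j; rw [← hLv j]; exact Finset.sum_congr rfl fun u _ => mul_comm _ _
    have hQ0 : (∑ u : V, ∑ w : V, v u * D u w * v w) = 0 := by
      calc (∑ u : V, ∑ w : V, v u * D u w * v w)
          = ∑ u : V, ∑ w : V, ∑ j : Fin N,
              (v u * X j u * (Y j w * v w) + v u * Y j u * (X j w * v w)) := by
            refine Finset.sum_congr rfl fun u _ => Finset.sum_congr rfl fun w _ => ?_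
            rw [hdecomp, Finset.mul_sum, Finset.sum_mul]
            exact Finset.sum_congr rfl fun j _ => by ring
        _ = ∑ u : V, ∑ j : Fin N, ∑ w : V,
              (v u * X j u * (Y j w * v w) + v u * Y j u * (X j w * v w)) :=
            Finset.sum_congr rfl fun u _ => Finset.sum_comm
        _ = ∑ j : Fin N, ∑ u : V, ∑ w : V,
              (v u * X j u * (Y j w * v w) + v u * Y j u * (X j w * v w)) :=
            Finset.sum_comm
        _ = ∑ j : Fin N, ((∑ u : V, v u * X j u) * (∑ w : V, Y j w * v w)
              + (∑ u : V, v u * Y j u) * (∑ w : V, X j w * v w)) := by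
            refine Finset.sum_congr rfl fun j _ => ?_
            rw [Finset.sum_mul, Finset.sum_mul, ← Finset.sum_add_distrib]
            refine Finset.sum_congr rfl fun u _ => ?_
            rw [Finset.mul_sum, Finset.mul_sum, ← Finset.sum_add_distrib]
        _ = 0 := by simp [hLv, hLv']
    have hvb : ∀ i : ↥P, (∑ u : V, v u * b i.1 u) = c i := by
      intro i
      simp only [hv]
      simp_rw [Finset.sum_mul]
      rw [Finset.sum_comm]
      simp_rw [mul_assoc, ← Finset.mul_sum, horth, Subtype.coe_inj]
      simp
    have hDv : ∀ u, (∑ w : V, D u w * v w) = ∑ i : ↥P, c i * (lam i.1 * b i.1 u) := by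
      intro u
      simp only [hv]
      simp_rw [Finset.mul_sum]
      rw [Finset.sum_comm]
      refine Finset.sum_congr rfl fun i _ => ?_
      rw [← hDb i.1 u, Finset.mul_sum]
      exact Finset.sum_congr rfl fun w _ => by ring
    have hQ2 : (∑ u : V, ∑ w : V, v u * D u w * v w)
        = ∑ i : ↥P, lam i.1 * (c i * c i) := by
      calc (∑ u : V, ∑ w : V, v u * D u w * v w)
          = ∑ u : V, v u * ∑ w : V, D u w * v w := by
            simp_rw [mul_assoc, ← Finset.mul_sum]
        _ = ∑ u : V, v u * ∑ i : ↥P, c i * (lam i.1 * b i.1 u) := by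
            simp_rw [hDv]
        _ = ∑ u : V, ∑ i : ↥P, (c i * lam i.1) * (v u * b i.1 u) := by
            refine Finset.sum_congr rfl fun u _ => ?_
            rw [Finset.mul_sum]
            exact Finset.sum_congr rfl fun i _ => by ring
        _ = ∑ i : ↥P, (c i * lam i.1) * ∑ u : V, v u * b i.1 u := by
            rw [Finset.sum_comm]
            simp_rw [← Finset.mul_sum]
        _ = ∑ i : ↥P, lam i.1 * (c i * c i) := by
            refine Finset.sum_congr rfl fun i _ => ?_
            rw [hvb i]; ring
    have hsum : (∑ i : ↥P, σ * lam i.1 * (c i * c i)) = 0 := by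
      have h0 : (∑ i : ↥P, lam i.1 * (c i * c i)) = 0 := by rw [← hQ2, hQ0]
      calc (∑ i : ↥P, σ * lam i.1 * (c i * c i))
          = σ * ∑ i : ↥P, lam i.1 * (c i * c i) := by
            rw [Finset.mul_sum]
            exact Finset.sum_congr rfl fun i _ => by ring
        _ = 0 := by rw [h0, mul_zero]
    funext i
    have hnn : ∀ i : ↥P, 0 ≤ σ * lam i.1 * (c i * c i) :=
      fun i => mul_nonneg (le_of_lt (hP i.1 i.2)) (mul_self_nonneg _)
    have h0 := (Finset.sum_eq_zero_iff_of_nonneg (fun i _ => hnn i)).mp hsum i (Finset.mem_univ i)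
    have hpos := hP i.1 i.2
    have hcc : c i * c i = 0 := by
      rcases mul_eq_zero.mp h0 with h | h
      · exact absurd h (ne_of_gt hpos)
      · exact h
    simpa using mul_self_eq_zero.mp hcc
  have hle := LinearMap.finrank_le_finrank_of_injective hinj
  rw [Module.finrank_fintype_fun_eq_card, Module.finrank_fintype_fun_eq_card,
    Fintype.card_coe, Fintype.card_fin] at hle
  exact hle

private lemma ind_helper (o p : Option Bool) :
    (if (∃ a b : Bool, o = some a ∧ p = some b ∧ a ≠ b) then (1:ℝ) else 0) =
    (if o = some false then (1:ℝ) else 0) * (if p = some true then (1:ℝ) else 0) +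
    (if o = some true then (1:ℝ) else 0) * (if p = some false then (1:ℝ) else 0) := by
  rcases o with _ | (_|_) <;> rcases p with _ | (_|_) <;> simp

/-- Witsenhausen's bound: any `(0,1,*)`-addressing of a connected graph has length at
least `max(n₊(D), n₋(D))`, where `D` is the distance matrix. -/
theorem addressing_eigenvalue_bound {V : Type*} [Fintype V] [DecidableEq V]
    (G : SimpleGraph V) (hG : G.Connected)
    (D : Matrix V V ℝ) (hDdef : ∀ u v, D u v = G.dist u v)
    (hD : D.IsHermitian) (N : ℕ) (f : V → Fin N → Option Bool)
    (hf : isAddressing G N f) :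
    max (Finset.univ.filter fun v => 0 < hD.eigenvalues v).card
      (Finset.univ.filter fun v => hD.eigenvalues v < 0).card ≤ N := by
  classical
  set X : Fin N → V → ℝ := fun j u => if f u j = some false then 1 else 0 with hX
  set Y : Fin N → V → ℝ := fun j u => if f u j = some true then 1 else 0 with hY
  have hdecomp : ∀ u w, D u w = ∑ j : Fin N, (X j u * Y j w + Y j u * X j w) := by
    intro u w
    rw [hDdef, hf u w, Finset.card_filter]
    push_cast
    refine Finset.sum_congr rfl fun j _ => ?_
    simp only [hX, hY]
    exact ind_helper (f u j) (f w j)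
  refine max_le ?_ ?_
  · refine witsen_aux D hD N X Y hdecomp 1 _ ?_
    intro i hi
    simpa using (Finset.mem_filter.mp hi).2
  · refine witsen_aux D hD N X Y hdecomp (-1) _ ?_
    intro i hi
    have h := (Finset.mem_filter.mp hi).2
    nlinarith
end

section
/- For any integer a ≥ 1, N_2(K_{a,1,1}) = a + 1, i.e., the minimum length of a (0,1,*)-addressing of the complete tripartite graph K_{a,1,1} is a+1. -/
/-- The complete tripartite graph `K_{a,1,1}` on `Fin (a+2)`: vertices `0,…,a-1` form
the part of size `a`, and `a`, `a+1` are singleton parts. -/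
def K_a11 (a : ℕ) : SimpleGraph (Fin (a + 2)) where
  Adj u v := (if (u : ℕ) < a then 0 else (u : ℕ)) ≠ (if (v : ℕ) < a then 0 else (v : ℕ))
  symm := ⟨fun _ _ h => h.symm⟩
  loopless := ⟨fun _ h => h rfl⟩

/-!
Upper bound: give the vertex `u < a` of the large part the address that is `1` in coordinate `u`
and `0` elsewhere, give `a` the address `*⋯*1`, and give `a + 1` the address `0⋯0`.

Lower bound: writing `Z` and `O` for the `N × V` incidence matrices of the zeros and the ones of an
addressing, the distance matrix is `Zᵀ O + Oᵀ Z`, so the distance quadratic form vanishes on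
`ker Z`, a subspace of codimension at most `N`. For `K_{a,1,1}` the distance form is negative
definite on the hyperplane `2 ∑_{u<a} x_u + x_a + x_{a+1} = 0`, of dimension `a + 1`: there it equals
`-(2 ∑_{u<a} x_u² + (x_a - x_{a+1})² / 2)`. Hence this hyperplane meets `ker Z` trivially and
`N ≥ a + 1`.
-/

open Matrix

namespace SimpleGraph

variable {V : Type*} {G : SimpleGraph V}

lemma dist_eq_two_of_adj_of_adj {u v w : V} (huv : u ≠ v) (hnadj : ¬G.Adj u v)
    (huw : G.Adj u w) (hwv : G.Adj w v) : G.dist u v = 2 := by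
  have hreach : G.Reachable u v := huw.reachable.trans hwv.reachable
  exact_mod_cast
    hreach.coe_dist_eq_edist.trans (edist_eq_two_iff.mpr ⟨huv, hnadj, w, huw, hwv.symm⟩)

noncomputable def distMatrix (G : SimpleGraph V) : Matrix V V ℝ :=
  of fun u v => (G.dist u v : ℝ)

end SimpleGraph

def addressMatrix {V : Type*} {N : ℕ} (f : V → Fin N → Option Bool) (b : Bool) :
    Matrix (Fin N) V ℝ :=
  of fun j u => if f u j = some b then 1 else 0

lemma ite_conflict_eq (o p : Option Bool) :
    (if ∃ b c : Bool, o = some b ∧ p = some c ∧ b ≠ c then (1 : ℝ) else 0) =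
      (if o = some false then 1 else 0) * (if p = some true then 1 else 0) +
      (if o = some true then 1 else 0) * (if p = some false then 1 else 0) := by
  rcases o with _ | _ | _ <;> rcases p with _ | _ | _ <;> simp

lemma isAddressing_of_lt {V : Type*} [LinearOrder V] {G : SimpleGraph V} {N : ℕ}
    {f : V → Fin N → Option Bool}
    (h : ∀ u v, u < v → G.dist u v = (Finset.univ.filter fun j : Fin N =>
      ∃ b c : Bool, f u j = some b ∧ f v j = some c ∧ b ≠ c).card) :
    isAddressing G N f := by
  intro u v
  rcases lt_trichotomy u v with huv | rfl | huv
  · exact h u v huv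
  · rw [SimpleGraph.dist_self, eq_comm, Finset.card_eq_zero, Finset.filter_eq_empty_iff]
    rintro j - ⟨b, c, hb, hc, hbc⟩
    exact hbc (Option.some_injective _ (hb.symm.trans hc))
  · rw [SimpleGraph.dist_comm, h v u huv]
    congr 1
    ext j
    simp only [Finset.mem_filter, Finset.mem_univ, true_and]
    constructor <;> rintro ⟨b, c, hb, hc, hbc⟩ <;> exact ⟨c, b, hc, hb, hbc.symm⟩

namespace isAddressing

variable {V : Type*} {G : SimpleGraph V} {N : ℕ} {f : V → Fin N → Option Bool}

theorem distMatrix_eq (hf : isAddressing G N f) :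
    G.distMatrix = (addressMatrix f false)ᵀ * addressMatrix f true +
      (addressMatrix f true)ᵀ * addressMatrix f false := by
  ext u v
  simp only [SimpleGraph.distMatrix, of_apply, hf u v, Finset.card_filter, Nat.cast_sum,
    Nat.cast_ite, Nat.cast_one, Nat.cast_zero, ite_conflict_eq, Matrix.add_apply, mul_apply,
    transpose_apply, addressMatrix, ← Finset.sum_add_distrib]

theorem dotProduct_distMatrix_mulVec_eq_zero [Fintype V] (hf : isAddressing G N f)
    {x : V → ℝ} (hx : addressMatrix f false *ᵥ x = 0) : x ⬝ᵥ G.distMatrix *ᵥ x = 0 := by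
  rw [hf.distMatrix_eq, add_mulVec, dotProduct_add, ← mulVec_mulVec, ← mulVec_mulVec,
    dotProduct_mulVec, dotProduct_mulVec x, vecMul_transpose, vecMul_transpose, hx]
  simp

theorem finrank_le [Fintype V] (hf : isAddressing G N f) (W : Submodule ℝ (V → ℝ))
    (hW : ∀ x ∈ W, x ⬝ᵥ G.distMatrix *ᵥ x = 0 → x = 0) : Module.finrank ℝ W ≤ N := by
  have hinj : Function.Injective ((addressMatrix f false).mulVecLin.domRestrict W) := by
    rw [← LinearMap.ker_eq_bot, LinearMap.ker_eq_bot']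
    rintro ⟨x, hxW⟩ hx
    exact Subtype.ext (hW x hxW (hf.dotProduct_distMatrix_mulVec_eq_zero hx))
  simpa using LinearMap.finrank_le_finrank_of_injective hinj

end isAddressing

lemma dotProduct_mulVec_vecMulVec_add_vecMulVec_sub_diagonal {n : Type*} [Fintype n]
    [DecidableEq n] (p c x : n → ℝ) :
    x ⬝ᵥ (vecMulVec 1 1 + vecMulVec p p - diagonal c) *ᵥ x =
      (1 ⬝ᵥ x) ^ 2 + (p ⬝ᵥ x) ^ 2 - ∑ u, c u * x u ^ 2 := by
  simp only [add_mulVec, sub_mulVec, vecMulVec_mulVec, dotProduct_add, dotProduct_sub,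
    op_smul_eq_smul, dotProduct_smul, smul_eq_mul]
  rw [dotProduct_comm x 1, dotProduct_comm x p, ← sq, ← sq]
  simp only [dotProduct, mulVec_diagonal]
  exact congrArg _ (Finset.sum_congr rfl fun u _ => by ring)

section K_a11

open SimpleGraph

variable {a : ℕ}

lemma K_a11_adj_iff {u v : Fin (a + 2)} :
    (K_a11 a).Adj u v ↔ u ≠ v ∧ ¬((u : ℕ) < a ∧ (v : ℕ) < a) := by
  simp only [K_a11, ne_eq, Fin.ext_iff]
  split_ifs <;> omega

lemma K_a11_dist (u v : Fin (a + 2)) :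
    (K_a11 a).dist u v = if u = v then 0 else if (u : ℕ) < a ∧ (v : ℕ) < a then 2 else 1 := by
  split_ifs with huv hpart
  · simp [huv]
  · refine dist_eq_two_of_adj_of_adj (w := ⟨a, by omega⟩) huv ?_ ?_ ?_ <;>
      simp [K_a11_adj_iff, Fin.ext_iff, hpart] <;> omega
  · exact dist_eq_one_iff_adj.mpr (K_a11_adj_iff.mpr ⟨huv, hpart⟩)

variable (a) in
def K_a11Address : Fin (a + 2) → Fin (a + 1) → Option Bool := fun u j =>
  if (u : ℕ) < a then some (decide ((j : ℕ) = u))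
  else if (u : ℕ) = a then (if (j : ℕ) = a then some true else none)
  else some false

variable (a) in
theorem isAddressing_K_a11Address : isAddressing (K_a11 a) (a + 1) (K_a11Address a) := by
  refine isAddressing_of_lt fun u v huv => ?_
  rw [Fin.lt_def] at huv
  rw [K_a11_dist, if_neg (Fin.ne_of_lt huv), eq_comm]
  rcases (show (v : ℕ) < a ∨ (u : ℕ) < a ∧ (v : ℕ) = a ∨
      (u : ℕ) < a ∧ (v : ℕ) = a + 1 ∨ (u : ℕ) = a ∧ (v : ℕ) = a + 1 by omega)
    with hv | ⟨hu, hv⟩ | ⟨hu, hv⟩ | ⟨hu, hv⟩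
  · rw [if_pos ⟨huv.trans hv, hv⟩, Finset.card_eq_two]
    refine ⟨⟨u, by omega⟩, ⟨v, by omega⟩, by simp [Fin.ext_iff]; omega, ?_⟩
    ext j
    simp [K_a11Address, huv.trans hv, hv, Fin.ext_iff]
    omega
  · rw [if_neg (by omega), Finset.card_eq_one]
    refine ⟨⟨a, by omega⟩, ?_⟩
    ext j
    simp [K_a11Address, hu, hv, Fin.ext_iff]
    omega
  · rw [if_neg (by omega), Finset.card_eq_one]
    refine ⟨⟨u, by omega⟩, ?_⟩
    ext j
    simp [K_a11Address, hu, hv, Fin.ext_iff]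
  · rw [if_neg (by omega), Finset.card_eq_one]
    refine ⟨⟨a, by omega⟩, ?_⟩
    ext j
    simp [K_a11Address, hu, hv, Fin.ext_iff]

variable (a) in
def largePartIndicator : Fin (a + 2) → ℝ := fun u => if (u : ℕ) < a then 1 else 0

lemma K_a11_distMatrix :
    (K_a11 a).distMatrix = vecMulVec 1 1 + vecMulVec (largePartIndicator a) (largePartIndicator a)
      - diagonal (1 + largePartIndicator a) := by
  ext u v
  simp only [distMatrix, of_apply, K_a11_dist, largePartIndicator, Matrix.add_apply,
    Matrix.sub_apply, vecMulVec_apply, diagonal_apply, Pi.add_apply, Pi.one_apply]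
  split_ifs <;> simp_all
  norm_num

lemma K_a11_quadForm {x : Fin (a + 2) → ℝ} (hx : (1 + largePartIndicator a) ⬝ᵥ x = 0) :
    x ⬝ᵥ (K_a11 a).distMatrix *ᵥ x = -(2 * ∑ i : Fin a, x (Fin.castAdd 2 i) ^ 2 +
      (x (Fin.natAdd a 0) - x (Fin.natAdd a 1)) ^ 2 / 2) := by
  rw [K_a11_distMatrix, dotProduct_mulVec_vecMulVec_add_vecMulVec_sub_diagonal]
  simp only [dotProduct, Fin.sum_univ_add, Fin.sum_univ_two, largePartIndicator, Pi.add_apply,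
    Pi.one_apply, Fin.val_castAdd, Fin.val_natAdd, Fin.is_lt, if_true, add_zero, if_false,
    add_lt_iff_neg_left, Nat.not_lt_zero, one_mul, zero_mul, ← Finset.mul_sum] at hx ⊢
  linear_combination
    (∑ i : Fin a, x (Fin.castAdd 2 i) + (x (Fin.natAdd a 0) + x (Fin.natAdd a 1)) / 2) * hx

lemma K_a11_eq_zero_of_quadForm_eq_zero {x : Fin (a + 2) → ℝ}
    (hx : (1 + largePartIndicator a) ⬝ᵥ x = 0) (hQ : x ⬝ᵥ (K_a11 a).distMatrix *ᵥ x = 0) :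
    x = 0 := by
  rw [K_a11_quadForm hx] at hQ
  have hsq : ∑ i : Fin a, x (Fin.castAdd 2 i) ^ 2 = 0 := by
    nlinarith [Finset.sum_nonneg fun i (_ : i ∈ Finset.univ) => sq_nonneg (x (Fin.castAdd 2 i)),
      sq_nonneg (x (Fin.natAdd a 0) - x (Fin.natAdd a 1))]
  have hlarge : ∀ i : Fin a, x (Fin.castAdd 2 i) = 0 := fun i =>
    pow_eq_zero_iff two_ne_zero |>.mp <|
      (Finset.sum_eq_zero_iff_of_nonneg fun i _ => sq_nonneg _).mp hsq i (Finset.mem_univ i)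
  have hsingletons_eq : x (Fin.natAdd a 0) = x (Fin.natAdd a 1) := by
    nlinarith [sq_nonneg (x (Fin.natAdd a 0) - x (Fin.natAdd a 1))]
  simp only [dotProduct, Fin.sum_univ_add, Fin.sum_univ_two, hlarge, mul_zero,
    Finset.sum_const_zero, zero_add, largePartIndicator, Pi.add_apply, Pi.one_apply,
    Fin.val_natAdd, add_lt_iff_neg_left, Nat.not_lt_zero, if_false, add_zero, one_mul] at hx
  have hsingletons : ∀ i : Fin 2, x (Fin.natAdd a i) = 0 :=
    Fin.forall_fin_two.mpr ⟨by linarith, by linarith⟩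
  funext u
  exact Fin.addCases hlarge hsingletons u

variable (a) in
lemma finrank_ker_dotProduct_one_add_largePartIndicator :
    Module.finrank ℝ (LinearMap.ker (dotProductBilin ℝ ℝ (1 + largePartIndicator a))) =
      a + 1 := by
  have hne : dotProductBilin ℝ ℝ (1 + largePartIndicator a) ≠ 0 := fun h => by
    simpa [largePartIndicator] using LinearMap.congr_fun h (Pi.single (Fin.last (a + 1)) 1)
  simpa using Module.Dual.finrank_ker_add_one_of_ne_zero hne

end K_a11

theorem N2_K_a11_general (a : ℕ) :
    (∃ f : Fin (a + 2) → Fin (a + 1) → Option Bool, isAddressing (K_a11 a) (a + 1) f) ∧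
    (∀ (N : ℕ) (f : Fin (a + 2) → Fin N → Option Bool),
      isAddressing (K_a11 a) N f → a + 1 ≤ N) := by
  refine ⟨⟨K_a11Address a, isAddressing_K_a11Address a⟩, fun N f hf => ?_⟩
  calc a + 1
      = Module.finrank ℝ (LinearMap.ker (dotProductBilin ℝ ℝ (1 + largePartIndicator a))) :=
        (finrank_ker_dotProduct_one_add_largePartIndicator a).symm
    _ ≤ N := hf.finrank_le _ fun x hx hQ => K_a11_eq_zero_of_quadForm_eq_zero hx hQ

/-- `N₂(K_{a,1,1}) = a + 1`. -/
theorem N2_K_a11 (a : ℕ) (ha : 1 ≤ a) :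
    (∃ f : Fin (a + 2) → Fin (a + 1) → Option Bool, isAddressing (K_a11 a) (a + 1) f) ∧
    (∀ (N : ℕ) (f : Fin (a + 2) → Fin N → Option Bool),
      isAddressing (K_a11 a) N f → a + 1 ≤ N) :=
  N2_K_a11_general a
end
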